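/- Under the QAOA overlap lemma with all phase angles bounded by 2π, if a p-round QAOA protocol starting from the uniform superposition |ψ₀⟩ ∈ ℂ^N with diagonal search Hamiltonian H₁ (Boolean objective marking m states) produces a state with total probability λ on the marked set, then p ≥ (1 − (√(λm) + √((1−λ)(N−m)))²/N) / (2π · √(m(N−m))/N). In particular, for fixed λ and m ≪ N, p = Ω(√(N/m)). -/

import Mathlib

/-
Track the unnormalised overlap `A_k = ∑ z, ψ_k z` with the uniform state. The all-ones vector
is an eigenvector of the unitary mixer, so a mixer step preserves `‖A_k‖`. The phase separator
multiplies the marked part `s` of `A_k = s + t` by a unit phase `e`, and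
`‖e s + t‖² - ‖s + t‖² = 2 Re((e - 1) s t̄)`; by Cauchy–Schwarz `‖s‖ ‖t‖ ≤ √(m (N - m)) / 2`
for a unit vector, so `‖A_k‖²` drops by at most `2 √(m (N - m))` per round. It starts at `N`,
and Cauchy–Schwarz bounds its final value by `(√(λ m) + √((1 - λ) (N - m)))²`.
-/

open Finset Matrix Real

/-- The QAOA state after `k` rounds:
`ψ_{k+1} = e^{−iβ_k H₀} e^{−iγ_k H₁} ψ_k`, starting from `ψ₀`. -/
noncomputable def qaoaState {n : Type*} [Fintype n] [DecidableEq n]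
    (H0 H1 : Matrix n n ℂ) (β γ : ℕ → ℝ) (ψ0 : n → ℂ) : ℕ → n → ℂ
  | 0 => ψ0
  | k + 1 =>
      (NormedSpace.exp ((-(Complex.I * (β k : ℂ))) • H0) *
        NormedSpace.exp ((-(Complex.I * (γ k : ℂ))) • H1)).mulVec
        (qaoaState H0 H1 β γ ψ0 k)

section

variable {n : Type*} [Fintype n]

theorem Matrix.ofReal_sum_norm_sq (w : n → ℂ) :
    ((∑ z, ‖w z‖ ^ 2 : ℝ) : ℂ) = star w ⬝ᵥ w := by
  push_cast
  simp only [dotProduct, Pi.star_apply, Complex.star_def, Complex.conj_mul']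

variable [DecidableEq n]

open scoped Norms.Operator in
theorem Matrix.exp_mulVec_of_mulVec_eq_smul {A : Matrix n n ℂ} {v : n → ℂ} {c : ℂ}
    (h : A *ᵥ v = c • v) : NormedSpace.exp A *ᵥ v = Complex.exp c • v := by
  -- every column of `B` is `v`, so the eigenvector equation reads `A * B = B * (c • 1)`
  let B : Matrix n n ℂ := Matrix.of fun i _ => v i
  have hB : SemiconjBy B (algebraMap ℂ _ c) A := by
    rw [SemiconjBy, Algebra.algebraMap_eq_smul_one, Matrix.mul_smul, mul_one]
    ext i j
    simpa [B, Matrix.mul_apply, mulVec, dotProduct] using (congrFun h i).symm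
  ext i
  have := congrFun₂ hB.exp_right i i
  rw [← NormedSpace.algebraMap_exp_comm, Algebra.algebraMap_eq_smul_one, Matrix.mul_smul,
    mul_one] at this
  simp only [smul_apply, of_apply, mul_apply, B, smul_eq_mul] at this
  simp only [mulVec, dotProduct, Pi.smul_apply, smul_eq_mul, Complex.exp_eq_exp_ℂ]
  exact this.symm

theorem Matrix.IsHermitian.exp_smul_mem_unitaryGroup {H : Matrix n n ℂ} (hH : H.IsHermitian)
    (t : ℝ) : NormedSpace.exp ((-(Complex.I * t)) • H) ∈ unitaryGroup n ℂ := by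
  set A := (-(Complex.I * t)) • H
  have hskew : star A = -A := by
    rw [star_smul, hH.star_eq, ← neg_smul]
    simp
  rw [mem_unitaryGroup_iff', star_eq_conjTranspose, ← exp_conjTranspose, ← star_eq_conjTranspose,
    hskew, ← exp_add_of_commute _ _ (Commute.refl A).neg_left, neg_add_cancel, NormedSpace.exp_zero]

theorem Matrix.sum_norm_sq_mulVec_of_mem_unitaryGroup {U : Matrix n n ℂ}
    (hU : U ∈ unitaryGroup n ℂ) (w : n → ℂ) :
    ∑ z, ‖(U *ᵥ w) z‖ ^ 2 = ∑ z, ‖w z‖ ^ 2 := by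
  have h : star (U *ᵥ w) ⬝ᵥ (U *ᵥ w) = star w ⬝ᵥ w := by
    rw [star_mulVec, dotProduct_mulVec, vecMul_vecMul, ← star_eq_conjTranspose,
      mem_unitaryGroup_iff'.mp hU, vecMul_one]
  exact_mod_cast (ofReal_sum_norm_sq _).trans (h.trans (ofReal_sum_norm_sq w).symm)

open scoped ComplexOrder in
theorem Matrix.norm_star_dotProduct_mulVec_of_mulVec_eq_smul {U : Matrix n n ℂ}
    (hU : U ∈ unitaryGroup n ℂ) {v : n → ℂ} {μ : ℂ} (hv : U *ᵥ v = μ • v) (w : n → ℂ) :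
    ‖star v ⬝ᵥ (U *ᵥ w)‖ = ‖star v ⬝ᵥ w‖ := by
  have hinv : μ • (Uᴴ *ᵥ v) = v := by
    rw [← mulVec_smul, ← hv, mulVec_mulVec, ← star_eq_conjTranspose,
      mem_unitaryGroup_iff'.mp hU, one_mulVec]
  have hadj : ∀ w, star μ * (star v ⬝ᵥ (U *ᵥ w)) = star v ⬝ᵥ w := fun w => by
    rw [dotProduct_mulVec, ← smul_eq_mul, ← smul_dotProduct]
    congr 1
    simpa [star_mulVec, star_smul] using congrArg star hinv
  rcases eq_or_ne v 0 with rfl | hv0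
  · simp
  have hμ : ‖μ‖ = 1 := by
    have h := hadj v
    rw [hv, dotProduct_smul, smul_eq_mul, ← mul_assoc] at h
    have hvv : star v ⬝ᵥ v ≠ 0 := dotProduct_star_self_eq_zero.not.mpr hv0
    have h1 : ((‖μ‖ ^ 2 : ℝ) : ℂ) = 1 := by
      rw [Complex.ofReal_pow, ← Complex.conj_mul', ← Complex.star_def]
      simpa [hvv] using h
    exact (pow_eq_one_iff_of_nonneg (norm_nonneg μ) two_ne_zero).mp (by exact_mod_cast h1)
  rw [← hadj w, norm_mul, norm_star, hμ, one_mul]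

theorem Matrix.sum_exp_smul_diagonal_indicator_mulVec (S : Finset n) (a : ℂ) (w : n → ℂ) :
    ∑ z, (NormedSpace.exp (a • diagonal fun z => if z ∈ S then (1 : ℂ) else 0) *ᵥ w) z =
      Complex.exp a * ∑ z ∈ S, w z + ∑ z ∈ Sᶜ, w z := by
  rw [← diagonal_smul, exp_diagonal, ← sum_add_sum_compl S, mul_sum]
  congr 1 <;> refine sum_congr rfl fun z hz => ?_ <;>
    simp_all [mulVec_diagonal, Pi.exp_def, ← Complex.exp_eq_exp_ℂ]

end

theorem Complex.abs_norm_sq_mul_add_sub_norm_sq_add_le {e : ℂ} (he : ‖e‖ = 1) (s t : ℂ) :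
    |‖e * s + t‖ ^ 2 - ‖s + t‖ ^ 2| ≤ 4 * (‖s‖ * ‖t‖) := by
  have hdiff : ‖e * s + t‖ ^ 2 - ‖s + t‖ ^ 2 = 2 * ((e - 1) * s * starRingEnd ℂ t).re := by
    rw [Complex.sq_norm, Complex.sq_norm, Complex.normSq_add, Complex.normSq_add,
      Complex.normSq_mul, Complex.normSq_eq_norm_sq e, he]
    simp only [sub_mul, one_mul, Complex.sub_re]
    ring
  have hphase : ‖e - 1‖ ≤ 2 := (norm_sub_le _ _).trans (by simp [he]; norm_num)
  calc |‖e * s + t‖ ^ 2 - ‖s + t‖ ^ 2|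
      ≤ 2 * ‖(e - 1) * s * starRingEnd ℂ t‖ := by
        rw [hdiff, abs_mul, abs_two]
        exact mul_le_mul_of_nonneg_left (Complex.abs_re_le_norm _) zero_le_two
    _ = 2 * (‖e - 1‖ * (‖s‖ * ‖t‖)) := by rw [norm_mul, norm_mul, Complex.norm_conj, mul_assoc]
    _ ≤ 4 * (‖s‖ * ‖t‖) := by nlinarith [mul_nonneg (norm_nonneg s) (norm_nonneg t)]

theorem Real.sqrt_mul_mul_sqrt_mul_one_sub_le {a b x : ℝ} (ha : 0 ≤ a) (hb : 0 ≤ b)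
    (hx : 0 ≤ x) : √(a * x) * √(b * (1 - x)) ≤ √(a * b) / 2 := by
  have hquarter : √(x * (1 - x)) ≤ 1 / 2 :=
    Real.sqrt_le_iff.mpr ⟨by norm_num, by nlinarith [sq_nonneg (x - 1 / 2)]⟩
  calc √(a * x) * √(b * (1 - x)) = √(a * b) * √(x * (1 - x)) := by
        rw [← Real.sqrt_mul (by positivity), ← Real.sqrt_mul (by positivity)]
        ring_nf
    _ ≤ √(a * b) / 2 := by nlinarith [Real.sqrt_nonneg (a * b)]

theorem norm_sum_le_sqrt_card_mul_sum_norm_sq {ι E : Type*} [SeminormedAddCommGroup E]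
    (s : Finset ι) (f : ι → E) : ‖∑ i ∈ s, f i‖ ≤ √(#s * ∑ i ∈ s, ‖f i‖ ^ 2) :=
  Real.le_sqrt_of_sq_le <|
    (pow_le_pow_left₀ (norm_nonneg _) (norm_sum_le s f) 2).trans sq_sum_le_card_mul_sum_sq

section

variable {ι E : Type*} [Fintype ι] [DecidableEq ι]

theorem sum_compl_norm_sq_eq_one_sub [SeminormedAddCommGroup E] {f : ι → E}
    (hf : ∑ i, ‖f i‖ ^ 2 = 1) (S : Finset ι) :
    ∑ i ∈ Sᶜ, ‖f i‖ ^ 2 = 1 - ∑ i ∈ S, ‖f i‖ ^ 2 := by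
  rw [← hf, ← sum_add_sum_compl S]
  ring

theorem norm_sum_le_sqrt_add_sqrt_compl [SeminormedAddCommGroup E] (S : Finset ι) (f : ι → E) :
    ‖∑ i, f i‖ ≤ √(#S * ∑ i ∈ S, ‖f i‖ ^ 2) + √(#Sᶜ * ∑ i ∈ Sᶜ, ‖f i‖ ^ 2) := by
  rw [← sum_add_sum_compl S]
  exact (norm_add_le _ _).trans (add_le_add (norm_sum_le_sqrt_card_mul_sum_norm_sq S f)
    (norm_sum_le_sqrt_card_mul_sum_norm_sq Sᶜ f))

theorem abs_norm_sq_sum_phase_sub_le {w : ι → ℂ} (hw : ∑ i, ‖w i‖ ^ 2 = 1) (S : Finset ι)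
    {e : ℂ} (he : ‖e‖ = 1) :
    |‖e * ∑ i ∈ S, w i + ∑ i ∈ Sᶜ, w i‖ ^ 2 - ‖∑ i, w i‖ ^ 2| ≤ 2 * √(#S * #Sᶜ) := by
  set x := ∑ i ∈ S, ‖w i‖ ^ 2
  have hx : 0 ≤ x := sum_nonneg fun i _ => by positivity
  rw [← sum_add_sum_compl S]
  calc _ ≤ 4 * (‖∑ i ∈ S, w i‖ * ‖∑ i ∈ Sᶜ, w i‖) :=
        Complex.abs_norm_sq_mul_add_sub_norm_sq_add_le he _ _
    _ ≤ 4 * (√(#S * x) * √(#Sᶜ * (1 - x))) := by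
        rw [← sum_compl_norm_sq_eq_one_sub hw]
        gcongr <;> exact norm_sum_le_sqrt_card_mul_sum_norm_sq _ _
    _ ≤ 4 * (√(#S * #Sᶜ) / 2) := by
        gcongr
        exact Real.sqrt_mul_mul_sqrt_mul_one_sub_le (by positivity) (by positivity) hx
    _ = 2 * √(#S * #Sᶜ) := by ring

end

theorem sub_le_mul_of_forall_sub_succ_le (f : ℕ → ℝ) {C : ℝ} (h : ∀ k, f k - f (k + 1) ≤ C)
    (n : ℕ) : f 0 - f n ≤ C * n := by
  induction n with
  | zero => simp
  | succ k ih => push_cast; linarith [h k]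

theorem one_sub_div_div_two_pi_mul_div_le {N Q R p : ℝ} (hR : 0 ≤ R) (hp : 0 ≤ p)
    (h : N - Q ≤ 2 * R * p) : (1 - Q / N) / (2 * π * (R / N)) ≤ p := by
  rcases eq_or_ne N 0 with rfl | hN
  · simpa using hp
  rcases hR.eq_or_lt with rfl | hR
  · simpa using hp
  have hπ : 1 ≤ π := by linarith [pi_gt_three]
  rw [one_sub_div hN, mul_div_assoc', div_div_div_cancel_right₀ hN, div_le_iff₀ (by positivity)]
  nlinarith [mul_nonneg (mul_nonneg hR.le hp) (sub_nonneg.mpr hπ)]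

theorem Matrix.isHermitian_diagonal_indicator {n : Type*} [DecidableEq n] (S : Finset n) :
    (diagonal fun z => if z ∈ S then (1 : ℂ) else 0).IsHermitian :=
  isHermitian_diagonal_iff.mpr fun z => by split_ifs <;> simp

section

variable {n : Type*} [Fintype n] [DecidableEq n] {H0 H1 : Matrix n n ℂ} (β γ : ℕ → ℝ)
  (ψ0 : n → ℂ)

theorem qaoaState_succ (k : ℕ) :
    qaoaState H0 H1 β γ ψ0 (k + 1) =
      NormedSpace.exp ((-(Complex.I * β k)) • H0) *ᵥ
        (NormedSpace.exp ((-(Complex.I * γ k)) • H1) *ᵥ qaoaState H0 H1 β γ ψ0 k) :=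
  (mulVec_mulVec _ _ _).symm

theorem sum_norm_sq_qaoaState (hH0 : H0.IsHermitian) (hH1 : H1.IsHermitian) (k : ℕ) :
    ∑ z, ‖qaoaState H0 H1 β γ ψ0 k z‖ ^ 2 = ∑ z, ‖ψ0 z‖ ^ 2 := by
  induction k with
  | zero => rfl
  | succ k ih =>
    rw [qaoaState_succ, sum_norm_sq_mulVec_of_mem_unitaryGroup (hH0.exp_smul_mem_unitaryGroup _),
      sum_norm_sq_mulVec_of_mem_unitaryGroup (hH1.exp_smul_mem_unitaryGroup _), ih]

theorem norm_sum_qaoaState_succ (hH0 : H0.IsHermitian) {c : ℂ} (hc : H0 *ᵥ 1 = c • 1)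
    {S : Finset n} (hH1 : H1 = diagonal fun z => if z ∈ S then (1 : ℂ) else 0) (k : ℕ) :
    ‖∑ z, qaoaState H0 H1 β γ ψ0 (k + 1) z‖ =
      ‖Complex.exp (-(Complex.I * γ k)) * ∑ z ∈ S, qaoaState H0 H1 β γ ψ0 k z +
        ∑ z ∈ Sᶜ, qaoaState H0 H1 β γ ψ0 k z‖ := by
  have hmix : ((-(Complex.I * β k)) • H0) *ᵥ 1 = (-(Complex.I * β k) * c) • 1 := by
    rw [smul_mulVec, hc, smul_smul]
  rw [qaoaState_succ, ← sum_exp_smul_diagonal_indicator_mulVec, ← hH1]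
  simpa only [star_one, one_dotProduct] using norm_star_dotProduct_mulVec_of_mulVec_eq_smul
    (hH0.exp_smul_mem_unitaryGroup (β k)) (exp_mulVec_of_mulVec_eq_smul hmix) _

theorem norm_sq_sum_qaoaState_sub_succ_le (hH0 : H0.IsHermitian) {c : ℂ} (hc : H0 *ᵥ 1 = c • 1)
    {S : Finset n} (hH1 : H1 = diagonal fun z => if z ∈ S then (1 : ℂ) else 0) {k : ℕ}
    (hψ : ∑ z, ‖qaoaState H0 H1 β γ ψ0 k z‖ ^ 2 = 1) :
    ‖∑ z, qaoaState H0 H1 β γ ψ0 k z‖ ^ 2 - ‖∑ z, qaoaState H0 H1 β γ ψ0 (k + 1) z‖ ^ 2 ≤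
      2 * √(#S * #Sᶜ) := by
  have hphase := abs_norm_sq_sum_phase_sub_le hψ S
    (e := Complex.exp (-(Complex.I * γ k))) (by simp [Complex.norm_exp])
  rw [← norm_sum_qaoaState_succ β γ ψ0 hH0 hc hH1] at hphase
  linarith [(abs_le.mp hphase).1]

end

theorem qaoa_search_rounds_lower_bound_general (N m p : ℕ)
    (S : Finset (Fin N)) (hS : S.card = m)
    (H0 H1 : Matrix (Fin N) (Fin N) ℂ) (hH0 : H0.IsHermitian)
    (hH1 : H1 = Matrix.diagonal fun z => if z ∈ S then (1 : ℂ) else 0)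
    (ψ0 : Fin N → ℂ) (hψ0 : ∀ z, ψ0 z = ((Real.sqrt N)⁻¹ : ℂ))
    (heig : ∃ c : ℂ, H0.mulVec ψ0 = c • ψ0)
    (β γ : ℕ → ℝ)
    (lam : ℝ) (hlam : ∑ z ∈ S, ‖qaoaState H0 H1 β γ ψ0 p z‖ ^ 2 = lam) :
    (1 - (Real.sqrt (lam * m) + Real.sqrt ((1 - lam) * ((N : ℝ) - m))) ^ 2 / N) /
        (2 * π * (Real.sqrt ((m : ℝ) * ((N : ℝ) - m)) / N)) ≤ (p : ℝ) := by
  obtain rfl | hN := N.eq_zero_or_pos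
  · simp
  obtain ⟨c, hc⟩ := heig
  replace hψ0 : ψ0 = ((√N : ℝ) : ℂ)⁻¹ • 1 := funext fun z => by simp [hψ0]
  have hmix : H0 *ᵥ 1 = c • 1 := by
    rw [hψ0, mulVec_smul, smul_comm] at hc
    exact smul_right_injective _ (by simp [hN.ne']) hc
  have hnorm0 : ∑ z, ‖ψ0 z‖ ^ 2 = 1 := by simp [hψ0, hN.ne']
  have hcard : (#Sᶜ : ℝ) = N - m := by
    have hmN : m ≤ N := hS ▸ by simpa using card_le_univ S
    rw [card_compl, hS, Fintype.card_fin, Nat.cast_sub hmN]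
  set ψ := qaoaState H0 H1 β γ ψ0
  have hnorm (k : ℕ) : ∑ z, ‖ψ k z‖ ^ 2 = 1 :=
    (sum_norm_sq_qaoaState β γ ψ0 hH0 (hH1 ▸ isHermitian_diagonal_indicator S) k).trans hnorm0
  have hstep (k : ℕ) : ‖∑ z, ψ k z‖ ^ 2 - ‖∑ z, ψ (k + 1) z‖ ^ 2 ≤ 2 * √(m * (N - m)) := by
    simpa only [hS, hcard] using norm_sq_sum_qaoaState_sub_succ_le β γ ψ0 hH0 hmix hH1 (hnorm k)
  have hinit : ‖∑ z, ψ 0 z‖ ^ 2 = N := by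
    have hsum : (N : ℂ) * ((√N : ℝ) : ℂ)⁻¹ = ((√N : ℝ) : ℂ) := by
      rw [← Complex.ofReal_natCast, ← Complex.ofReal_inv, ← Complex.ofReal_mul, ← div_eq_mul_inv,
        div_sqrt]
    simp [ψ, qaoaState, hψ0, hsum]
  have hfinal : ‖∑ z, ψ p z‖ ≤ √(lam * m) + √((1 - lam) * (N - m)) := by
    have := norm_sum_le_sqrt_add_sqrt_compl S (ψ p)
    rwa [sum_compl_norm_sq_eq_one_sub (hnorm p), hlam, hS, hcard, mul_comm (m : ℝ),
      mul_comm ((N : ℝ) - m)] at this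
  refine one_sub_div_div_two_pi_mul_div_le (sqrt_nonneg _) p.cast_nonneg ?_
  have := sub_le_mul_of_forall_sub_succ_le _ hstep p
  nlinarith [pow_le_pow_left₀ (norm_nonneg _) hfinal 2]

/-- QAOA lower bound for unstructured search: a `p`-round QAOA, starting from the uniform
superposition `ψ₀`, with a diagonal search Hamiltonian `H₁` marking a set `S` of `m` out of
`N` states, a Hermitian mixer `H₀` having `ψ₀` as eigenvector, and phase angles bounded by
`2π`, which produces total probability `λ` on the marked set, must satisfy
`p ≥ (1 − (√(λm) + √((1−λ)(N−m)))²/N) / (2π·√(m(N−m))/N)`. -/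
theorem qaoa_search_rounds_lower_bound (N m p : ℕ) (hN : 0 < N) (hm0 : 0 < m) (hmN : m < N)
    (S : Finset (Fin N)) (hS : S.card = m)
    (H0 H1 : Matrix (Fin N) (Fin N) ℂ) (hH0 : H0.IsHermitian)
    (hH1 : H1 = Matrix.diagonal fun z => if z ∈ S then (1 : ℂ) else 0)
    (ψ0 : Fin N → ℂ) (hψ0 : ∀ z, ψ0 z = ((Real.sqrt N)⁻¹ : ℂ))
    (heig : ∃ c : ℂ, H0.mulVec ψ0 = c • ψ0)
    (β γ : ℕ → ℝ) (hγ : ∀ j, |γ j| ≤ 2 * π)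
    (lam : ℝ) (hlam : ∑ z ∈ S, ‖qaoaState H0 H1 β γ ψ0 p z‖ ^ 2 = lam) :
    (1 - (Real.sqrt (lam * m) + Real.sqrt ((1 - lam) * ((N : ℝ) - m))) ^ 2 / N) /
        (2 * π * (Real.sqrt ((m : ℝ) * ((N : ℝ) - m)) / N)) ≤ (p : ℝ) :=
  qaoa_search_rounds_lower_bound_general N m p S hS H0 H1 hH0 hH1 ψ0 hψ0 heig β γ lam hlam
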